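/- Let a > b > 0, ε ∈ {+1,−1}, and let x ∈ ℝ⁹ be any point of the pendulum family 𝓛₅ (ε=+1) or 𝓛₆ (ε=−1), i.e. x has ω = (0,0,v), α = (a cos θ, −a sin θ, 0), β = (εb sin θ, εb cos θ, 0) for some v,θ ∈ ℝ. Then the integrals satisfy K(x) = (a − εb)² and G(x) = εab·H(x). -/
import Mathlib


noncomputable section

/-- The energy integral `H = ω₁²+ω₂²+½ω₃²−α₁−β₂`. -/
def kovH (x : Fin 9 → ℝ) : ℝ := (x 0)^2 + (x 1)^2 + (x 2)^2 / 2 - x 3 - x 7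

/-- The Kovalevskaya-type integral `K = (ω₁²−ω₂²+α₁−β₂)² + (2ω₁ω₂+α₂+β₁)²`. -/
def kovK (x : Fin 9 → ℝ) : ℝ :=
  ((x 0)^2 - (x 1)^2 + x 3 - x 7)^2 + (2 * x 0 * x 1 + x 4 + x 6)^2

/-- The integral `G` of the Kovalevskaya top in a double field. -/
def kovG (a b : ℝ) (x : Fin 9 → ℝ) : ℝ :=
  (x 0 * x 3 + x 1 * x 4 + x 5 * x 2 / 2)^2
  + (x 0 * x 6 + x 1 * x 7 + x 8 * x 2 / 2)^2
  + x 2 * ((x 4 * x 8 - x 5 * x 7) * x 0 + (x 5 * x 6 - x 3 * x 8) * x 1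
      + (x 3 * x 7 - x 4 * x 6) * x 2 / 2)
  - x 3 * b^2 - x 7 * a^2

/-- on the pendulum families `𝓛₅` (ε=+1), `𝓛₆` (ε=−1) one has
`K = (a − εb)²` and `G = εab·H`. -/
theorem integrals_on_L56 (a b : ℝ) (hb : 0 < b) (hab : b < a)
    (ε : ℝ) (hε : ε = 1 ∨ ε = -1) (v θ : ℝ)
    (x : Fin 9 → ℝ)
    (hx : x = ![0, 0, v, a * Real.cos θ, -(a * Real.sin θ), 0,
        ε * b * Real.sin θ, ε * b * Real.cos θ, 0]) :
    kovK x = (a - ε * b)^2 ∧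
    kovG a b x = ε * a * b * kovH x := by
  have h0 : x 0 = 0 := by rw [hx]; rfl
  have h1 : x 1 = 0 := by rw [hx]; rfl
  have h2 : x 2 = v := by rw [hx]; rfl
  have h3 : x 3 = a * Real.cos θ := by rw [hx]; rfl
  have h4 : x 4 = -(a * Real.sin θ) := by rw [hx]; rfl
  have h5 : x 5 = 0 := by rw [hx]; rfl
  have h6 : x 6 = ε * b * Real.sin θ := by rw [hx]; rfl
  have h7 : x 7 = ε * b * Real.cos θ := by rw [hx]; rfl
  have h8 : x 8 = 0 := by rw [hx]; rfl
  have hs := Real.sin_sq_add_cos_sq θ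
  have hε2 : ε ^ 2 = 1 := by rcases hε with h | h <;> rw [h] <;> norm_num
  constructor <;>
      simp only [kovK, kovG, kovH, h0, h1, h2, h3, h4, h5, h6, h7, h8]
  · linear_combination (a - ε * b) ^ 2 * hs
  · linear_combination (ε * a * b * v ^ 2 / 2) * hs + (a * b ^ 2 * Real.cos θ) * hε2
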